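/- Algorithmic term equivalence and path equivalence are closed under weakening by simultaneous path substitutions: if Γ ⊢ M ⇔ N : A (resp. Γ ⊢ M ↔ N : A) and π is a substitution from Γ to Δ mapping each variable x:T of Γ to a path P with Δ ⊢ P ↔ P : T, then Δ ⊢ M[π] ⇔ N[π] : A (resp. Δ ⊢ M[π] ↔ N[π] : A). -/

import Mathlib

/-- Simple types: base type `i` and function types. -/
inductive Ty : Type
  | base : Ty
  | arr  : Ty → Ty → Ty

/-- Untyped lambda terms with de Bruijn indices. -/
inductive Tm : Type
  | var : ℕ → Tm
  | lam : Tm → Tm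
  | app : Tm → Tm → Tm

namespace Tm

def upRen (ρ : ℕ → ℕ) : ℕ → ℕ
  | 0 => 0
  | n + 1 => ρ n + 1

/-- Renaming. -/
def rename (ρ : ℕ → ℕ) : Tm → Tm
  | var n => var (ρ n)
  | lam M => lam (rename (upRen ρ) M)
  | app M N => app (rename ρ M) (rename ρ N)

/-- Lifting a simultaneous substitution under a binder. -/
def lift (σ : ℕ → Tm) : ℕ → Tm
  | 0 => var 0
  | n + 1 => rename Nat.succ (σ n)

/-- Simultaneous (capture-avoiding) substitution. -/
def subst (σ : ℕ → Tm) : Tm → Tm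
  | var n => σ n
  | lam M => lam (subst (lift σ) M)
  | app M N => app (subst σ M) (subst σ N)

/-- Extending a substitution with a term for the top variable. -/
def scons (N : Tm) (σ : ℕ → Tm) : ℕ → Tm
  | 0 => N
  | n + 1 => σ n

/-- Substitution of a single term for the top variable. -/
def subst1 (N M : Tm) : Tm := subst (scons N var) M

end Tm

/-- Single-step weak head reduction. -/
inductive Step : Tm → Tm → Prop
  | beta {M N : Tm} : Step (Tm.app (Tm.lam M) N) (Tm.subst1 N M)
  | app {M M' N : Tm} : Step M M' → Step (Tm.app M N) (Tm.app M' N)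

/-- Multi-step weak head reduction (reflexive-transitive closure). -/
inductive MStep : Tm → Tm → Prop
  | refl {M : Tm} : MStep M M
  | trans1 {M M' M'' : Tm} : Step M M' → MStep M' M'' → MStep M M''

/-- Paths (neutral terms): a variable applied to arguments. -/
inductive IsPath : Tm → Prop
  | var {n : ℕ} : IsPath (Tm.var n)
  | app {M N : Tm} : IsPath M → IsPath (Tm.app M N)

/-- Typing contexts (de Bruijn): the `n`-th entry types variable `n`. -/
abbrev Ctx := List Ty

mutual
  /-- Algorithmic term equivalence `Γ ⊢ M ⇔ N : A`. -/
  inductive AlgTm : Ctx → Tm → Tm → Ty → Prop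
    | base {Γ : Ctx} {M N P Q : Tm} :
        MStep M P → MStep N Q → AlgPath Γ P Q Ty.base → AlgTm Γ M N Ty.base
    | arr {Γ : Ctx} {M N : Tm} {A B : Ty} :
        AlgTm (A :: Γ) (Tm.app (Tm.rename Nat.succ M) (Tm.var 0))
                       (Tm.app (Tm.rename Nat.succ N) (Tm.var 0)) B →
        AlgTm Γ M N (Ty.arr A B)

  /-- Algorithmic path equivalence `Γ ⊢ M ↔ N : A`. -/
  inductive AlgPath : Ctx → Tm → Tm → Ty → Prop
    | var {Γ : Ctx} {n : ℕ} {A : Ty} :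
        Γ[n]? = some A → AlgPath Γ (Tm.var n) (Tm.var n) A
    | app {Γ : Ctx} {M1 M2 N1 N2 : Tm} {A B : Ty} :
        AlgPath Γ M1 M2 (Ty.arr A B) → AlgTm Γ N1 N2 A →
        AlgPath Γ (Tm.app M1 N1) (Tm.app M2 N2) B
end

/-- `PathSub Δ π Γ`: π maps each variable `x:T` of Γ to a path `P` with `Δ ⊢ P ↔ P : T`. -/
def PathSub (Δ : Ctx) (π : ℕ → Tm) (Γ : Ctx) : Prop :=
  ∀ n A, Γ[n]? = some A → AlgPath Δ (π n) (π n) A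

/-- Logical equivalence `Γ ⊢ M ≈ N : A`, defined by recursion on the type. -/
def Log : Ty → Ctx → Tm → Tm → Prop
  | Ty.base => fun Γ M N => AlgTm Γ M N Ty.base
  | Ty.arr A B => fun Γ M N =>
      ∀ (Δ : Ctx) (π : ℕ → Tm), PathSub Δ π Γ →
        ∀ N1 N2, Log A Δ N1 N2 →
          Log B Δ (Tm.app (Tm.subst π M) N1) (Tm.app (Tm.subst π N) N2)

/-- `LogSub Δ σ1 σ2 Γ`: the substitutions σ1, σ2 are pointwise logically related at Γ. -/
def LogSub (Δ : Ctx) (σ1 σ2 : ℕ → Tm) (Γ : Ctx) : Prop :=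
  ∀ n A, Γ[n]? = some A → Log A Δ (σ1 n) (σ2 n)

/-- Declarative equivalence `Γ ⊢ M ≡ N : A`. -/
inductive Decl : Ctx → Tm → Tm → Ty → Prop
  | beta {Γ : Ctx} {M1 M2 N1 N2 : Tm} {A B : Ty} :
      Decl (A :: Γ) M2 N2 B → Decl Γ M1 N1 A →
      Decl Γ (Tm.app (Tm.lam M2) M1) (Tm.subst1 N1 N2) B
  | lam {Γ : Ctx} {M N : Tm} {A B : Ty} :
      Decl (A :: Γ) M N B → Decl Γ (Tm.lam M) (Tm.lam N) (Ty.arr A B)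
  | ext {Γ : Ctx} {M N : Tm} {A B : Ty} :
      Decl (A :: Γ) (Tm.app (Tm.rename Nat.succ M) (Tm.var 0))
                    (Tm.app (Tm.rename Nat.succ N) (Tm.var 0)) B →
      Decl Γ M N (Ty.arr A B)
  | var {Γ : Ctx} {n : ℕ} {A : Ty} :
      Γ[n]? = some A → Decl Γ (Tm.var n) (Tm.var n) A
  | app {Γ : Ctx} {M1 M2 N1 N2 : Tm} {A B : Ty} :
      Decl Γ M1 M2 (Ty.arr A B) → Decl Γ N1 N2 A →
      Decl Γ (Tm.app M1 N1) (Tm.app M2 N2) B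
  | symm {Γ : Ctx} {M N : Tm} {A : Ty} : Decl Γ M N A → Decl Γ N M A
  | trans {Γ : Ctx} {M N O : Tm} {A : Ty} :
      Decl Γ M N A → Decl Γ N O A → Decl Γ M O A

namespace Tm

theorem upRen_comp (ρ1 ρ2 : ℕ → ℕ) : upRen ρ2 ∘ upRen ρ1 = upRen (ρ2 ∘ ρ1) := by
  funext n; cases n <;> rfl

theorem rename_rename (ρ1 ρ2 : ℕ → ℕ) (M : Tm) :
    rename ρ2 (rename ρ1 M) = rename (ρ2 ∘ ρ1) M := by
  induction M generalizing ρ1 ρ2 with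
  | var n => rfl
  | lam M ih => simp only [rename, ih, upRen_comp]
  | app M N ihM ihN => simp [rename, ihM, ihN]

theorem lift_upRen (σ : ℕ → Tm) (ρ : ℕ → ℕ) : lift σ ∘ upRen ρ = lift (σ ∘ ρ) := by
  funext n; cases n <;> rfl

theorem subst_rename (σ : ℕ → Tm) (ρ : ℕ → ℕ) (M : Tm) :
    subst σ (rename ρ M) = subst (σ ∘ ρ) M := by
  induction M generalizing σ ρ with
  | var n => rfl
  | lam M ih => simp only [rename, subst, ih, lift_upRen]
  | app M N ihM ihN => simp [rename, subst, ihM, ihN]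

theorem upRen_lift (ρ : ℕ → ℕ) (σ : ℕ → Tm) :
    (fun n => rename (upRen ρ) (lift σ n)) = lift (fun n => rename ρ (σ n)) := by
  funext n
  cases n with
  | zero => rfl
  | succ n =>
      show rename (upRen ρ) (rename Nat.succ (σ n)) = rename Nat.succ (rename ρ (σ n))
      rw [rename_rename, rename_rename]; rfl

theorem rename_subst (ρ : ℕ → ℕ) (σ : ℕ → Tm) (M : Tm) :
    rename ρ (subst σ M) = subst (fun n => rename ρ (σ n)) M := by
  induction M generalizing σ ρ with
  | var n => rfl
  | lam M ih => simp only [rename, subst, ih, upRen_lift]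
  | app M N ihM ihN => simp [rename, subst, ihM, ihN]

theorem lift_lift (σ1 σ2 : ℕ → Tm) :
    (fun n => subst (lift σ2) (lift σ1 n)) = lift (fun n => subst σ2 (σ1 n)) := by
  funext n
  cases n with
  | zero => rfl
  | succ n =>
      show subst (lift σ2) (rename Nat.succ (σ1 n)) = rename Nat.succ (subst σ2 (σ1 n))
      rw [subst_rename, rename_subst]; rfl

theorem subst_subst (σ1 σ2 : ℕ → Tm) (M : Tm) :
    subst σ2 (subst σ1 M) = subst (fun n => subst σ2 (σ1 n)) M := by
  induction M generalizing σ1 σ2 with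
  | var n => rfl
  | lam M ih => simp only [subst, ih, lift_lift]
  | app M N ihM ihN => simp [subst, ihM, ihN]

theorem lift_var : lift var = var := by funext n; cases n <;> rfl

theorem subst_var (M : Tm) : subst var M = M := by
  induction M with
  | var n => rfl
  | lam M ih => simp only [subst, lift_var, ih]
  | app M N ihM ihN => simp [subst, ihM, ihN]

theorem subst_subst1 (σ : ℕ → Tm) (N M : Tm) :
    subst σ (subst1 N M) = subst1 (subst σ N) (subst (lift σ) M) := by
  unfold subst1
  rw [subst_subst, subst_subst]
  have h : (fun n => subst σ (scons N var n))
      = (fun n => subst (scons (subst σ N) var) (lift σ n)) := by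
    funext n; cases n with
  | zero => rfl
  | succ n =>
      show σ n = subst (scons (subst σ N) var) (rename Nat.succ (σ n))
      rw [subst_rename]
      show σ n = subst var (σ n)
      rw [subst_var]
  rw [h]

theorem rename_eq_subst (ρ : ℕ → ℕ) (M : Tm) :
    rename ρ M = subst (fun n => var (ρ n)) M := by
  induction M generalizing ρ with
  | var n => rfl
  | lam M ih =>
      simp only [rename, subst, ih]
      congr 1
      have : (fun n => var (upRen ρ n)) = lift (fun n => var (ρ n)) := by
        funext n; cases n <;> rfl
      rw [this]
  | app M N ihM ihN => simp [rename, subst, ihM, ihN]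

end Tm

theorem Step.substc {M M' : Tm} (σ : ℕ → Tm) (h : Step M M') :
    Step (Tm.subst σ M) (Tm.subst σ M') := by
  induction h generalizing σ with
  | @beta M N => rw [Tm.subst_subst1]; exact Step.beta
  | app _ ih => exact Step.app (ih σ)

theorem MStep.substc {M M' : Tm} (σ : ℕ → Tm) (h : MStep M M') :
    MStep (Tm.subst σ M) (Tm.subst σ M') := by
  induction h with
  | refl => exact MStep.refl
  | trans1 s _ ih => exact MStep.trans1 (s.substc σ) ih

def GoodRen (Δ : Ctx) (ρ : ℕ → ℕ) (Γ : Ctx) : Prop :=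
  ∀ n A, Γ[n]? = some A → Δ[ρ n]? = some A

theorem GoodRen.up {Δ : Ctx} {ρ : ℕ → ℕ} {Γ : Ctx} (h : GoodRen Δ ρ Γ) (A : Ty) :
    GoodRen (A :: Δ) (Tm.upRen ρ) (A :: Γ) := by
  intro n B hn
  cases n with
  | zero => exact hn
  | succ n => exact h n B hn

theorem alg_rename :
    (∀ Γ M N A, AlgTm Γ M N A → ∀ Δ ρ, GoodRen Δ ρ Γ →
        AlgTm Δ (Tm.rename ρ M) (Tm.rename ρ N) A) ∧
    (∀ Γ M N A, AlgPath Γ M N A → ∀ Δ ρ, GoodRen Δ ρ Γ →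
        AlgPath Δ (Tm.rename ρ M) (Tm.rename ρ N) A) := by
  have key : ∀ Γ M N A (h : AlgTm Γ M N A), ∀ Δ ρ, GoodRen Δ ρ Γ →
      AlgTm Δ (Tm.rename ρ M) (Tm.rename ρ N) A := by
    intro Γ M N A h
    induction h using AlgTm.rec
      (motive_2 := fun Γ M N A _ => ∀ Δ ρ, GoodRen Δ ρ Γ →
        AlgPath Δ (Tm.rename ρ M) (Tm.rename ρ N) A) with
    | base s1 s2 _ ih =>
        intro Δ ρ hρ
        refine AlgTm.base ?_ ?_ (ih Δ ρ hρ) <;>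
          (rw [Tm.rename_eq_subst, Tm.rename_eq_subst]; exact MStep.substc _ (by assumption))
    | arr _ ih =>
        intro Δ ρ hρ
        apply AlgTm.arr
        have := ih _ _ (hρ.up _)
        simpa [Tm.rename, Tm.upRen, Tm.rename_rename,
          show Tm.upRen ρ ∘ Nat.succ = Nat.succ ∘ ρ from by funext n; rfl] using this
    | var h Δ ρ hρ => exact AlgPath.var (hρ _ _ h)
    | app _ _ ih1 ih2 Δ ρ hρ =>
        exact AlgPath.app (ih1 Δ ρ hρ) (ih2 Δ ρ hρ)
  refine ⟨key, fun Γ M N A h => ?_⟩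
  induction h using AlgPath.rec
    (motive_1 := fun Γ M N A _ => ∀ Δ ρ, GoodRen Δ ρ Γ →
      AlgTm Δ (Tm.rename ρ M) (Tm.rename ρ N) A) with
  | base s1 s2 _ ih Δ ρ hρ =>
      refine AlgTm.base ?_ ?_ (ih Δ ρ hρ) <;>
        (rw [Tm.rename_eq_subst, Tm.rename_eq_subst]; exact MStep.substc _ (by assumption))
  | arr _ ih Δ ρ hρ =>
      apply AlgTm.arr
      have := ih _ _ (hρ.up _)
      simpa [Tm.rename, Tm.upRen, Tm.rename_rename,
        show Tm.upRen ρ ∘ Nat.succ = Nat.succ ∘ ρ from by funext n; rfl] using this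
  | var h => exact fun Δ ρ hρ => AlgPath.var (hρ _ _ h)
  | app _ _ ih1 ih2 =>
      exact fun Δ ρ hρ => AlgPath.app (ih1 Δ ρ hρ) (ih2 Δ ρ hρ)

theorem PathSub.lift {Δ : Ctx} {π : ℕ → Tm} {Γ : Ctx} (h : PathSub Δ π Γ) (A : Ty) :
    PathSub (A :: Δ) (Tm.lift π) (A :: Γ) := by
  intro n B hn
  cases n with
  | zero =>
      cases hn
      exact AlgPath.var rfl
  | succ n =>
      exact alg_rename.2 _ _ _ _ (h n B hn) (A :: Δ) Nat.succ (fun _ _ hh => hh)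

theorem subst_lift_rename (π : ℕ → Tm) (M : Tm) :
    Tm.subst (Tm.lift π) (Tm.rename Nat.succ M) = Tm.rename Nat.succ (Tm.subst π M) := by
  rw [Tm.subst_rename, Tm.rename_subst]
  rfl

theorem alg_subst :
    (∀ Γ M N A, AlgTm Γ M N A → ∀ Δ π, PathSub Δ π Γ →
        AlgTm Δ (Tm.subst π M) (Tm.subst π N) A) ∧
    (∀ Γ M N A, AlgPath Γ M N A → ∀ Δ π, PathSub Δ π Γ →
        AlgPath Δ (Tm.subst π M) (Tm.subst π N) A) := by
  have key : ∀ Γ M N A (h : AlgTm Γ M N A), ∀ Δ π, PathSub Δ π Γ →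
      AlgTm Δ (Tm.subst π M) (Tm.subst π N) A := by
    intro Γ M N A h
    induction h using AlgTm.rec
      (motive_2 := fun Γ M N A _ => ∀ Δ π, PathSub Δ π Γ →
        AlgPath Δ (Tm.subst π M) (Tm.subst π N) A) with
    | base s1 s2 _ ih =>
        intro Δ π hπ
        exact AlgTm.base (s1.substc π) (s2.substc π) (ih Δ π hπ)
    | arr _ ih =>
        intro Δ π hπ
        apply AlgTm.arr
        have := ih _ _ (hπ.lift _)
        simpa [Tm.subst, Tm.lift, subst_lift_rename] using this
    | var h Δ π hπ => exact hπ _ _ h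
    | app _ _ ih1 ih2 Δ π hπ =>
        exact AlgPath.app (ih1 Δ π hπ) (ih2 Δ π hπ)
  refine ⟨key, fun Γ M N A h => ?_⟩
  induction h using AlgPath.rec
    (motive_1 := fun Γ M N A _ => ∀ Δ π, PathSub Δ π Γ →
      AlgTm Δ (Tm.subst π M) (Tm.subst π N) A) with
  | base s1 s2 _ ih Δ π hπ =>
      exact AlgTm.base (s1.substc π) (s2.substc π) (ih Δ π hπ)
  | arr _ ih Δ π hπ =>
      apply AlgTm.arr
      have := ih _ _ (hπ.lift _)
      simpa [Tm.subst, Tm.lift, subst_lift_rename] using this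
  | var h => exact fun Δ π hπ => hπ _ _ h
  | app _ _ ih1 ih2 =>
      exact fun Δ π hπ => AlgPath.app (ih1 Δ π hπ) (ih2 Δ π hπ)

/-- Algorithmic equivalences are closed under path substitutions. -/
theorem alg_monotone {Gamma Delta : Ctx} {pi : Nat -> Tm} (hpi : PathSub Delta pi Gamma)
    (M N : Tm) (A : Ty) :
    (AlgTm Gamma M N A -> AlgTm Delta (Tm.subst pi M) (Tm.subst pi N) A) ∧
    (AlgPath Gamma M N A -> AlgPath Delta (Tm.subst pi M) (Tm.subst pi N) A) :=
  ⟨fun h => alg_subst.1 _ _ _ _ h _ _ hpi, fun h => alg_subst.2 _ _ _ _ h _ _ hpi⟩
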